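/- arXiv:2311.14251 — 2 statements merged into one kernel-verified Lean document; each statement's English description precedes it below -/
import Mathlib

section
/- Let P and Q be binary-input DMCs with finite output alphabets whose conditional output distributions P_0, P_1 and Q_0, Q_1 each have a common support point, and suppose the functions s ↦ d_C(P_0,P_1,s) and s ↦ d_C(Q_0,Q_1,s) on [0,1] are non-constant. Define E_s = min( max(d_C(P_0,P_1,s), d_C(P_0,P_1,1−s)), max(d_C(Q_0,Q_1,s), d_C(Q_0,Q_1,1−s)) ), E* = max_{0≤s≤1} E_s, and let s* ∈ [0,1/2] be a maximizer of E_s satisfying d_C(P_0,P_1,s*) ≥ d_C(P_0,P_1,1−s*) and d_C(Q_0,Q_1,s*) ≥ d_C(Q_0,Q_1,1−s*). Then at least one of the following holds: (i) E* = max_{0≤s≤1} d_C(P_0,P_1,s); (ii) E* = max_{0≤s≤1} d_C(Q_0,Q_1,s); (iii) E* = d_C(P_0,P_1,s*) = d_C(Q_0,Q_1,s*), s* ≠ 0, and the functions s ↦ d_C(P_0,P_1,s) and s ↦ d_C(Q_0,Q_1,s) are of strictly opposite type with respect to s*. -/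
open scoped BigOperators
open Finset

noncomputable section

/-- A probability mass function on a finite type, given as a real-valued function. -/
def IsPMF {α : Type*} [Fintype α] (p : α → ℝ) : Prop :=
  (∀ x, 0 ≤ p x) ∧ ∑ x, p x = 1

/-- A discrete memoryless channel: every input symbol yields a PMF on outputs. -/
def IsChannel {X Y : Type*} [Fintype Y] (P : X → Y → ℝ) : Prop :=
  ∀ x, IsPMF (P x)

/-- The Chernoff sum `Σ_x p(x)^{1-s} q(x)^s`, with terms where `p` or `q` vanish removed;
this realizes the continuous extension to the endpoints `s ∈ {0,1}`. -/
def cherSum {α : Type*} [Fintype α] (p q : α → ℝ) (s : ℝ) : ℝ :=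
  ∑ x, if p x = 0 ∨ q x = 0 then 0 else p x ^ (1 - s) * q x ^ s

/-- The Chernoff divergence `d_C(p, q, s)`. -/
def dC {α : Type*} [Fintype α] (p q : α → ℝ) (s : ℝ) : ℝ :=
  - Real.log (cherSum p q s)

/-- First derivative of the Chernoff divergence with respect to `s`. -/
def dC' {α : Type*} [Fintype α] (p q : α → ℝ) (s : ℝ) : ℝ :=
  deriv (dC p q) s

/-- Second derivative of the Chernoff divergence with respect to `s`. -/
def dC'' {α : Type*} [Fintype α] (p q : α → ℝ) (s : ℝ) : ℝ :=
  deriv (deriv (dC p q)) s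

/-- The tilted distribution `Q_s`. -/
def tilted {α : Type*} [Fintype α] (p q : α → ℝ) (s : ℝ) (x : α) : ℝ :=
  (if p x = 0 ∨ q x = 0 then 0 else p x ^ (1 - s) * q x ^ s) / cherSum p q s

/-- Kullback–Leibler divergence (natural log), with the convention `0 log 0 = 0`. -/
def KLdiv {α : Type*} [Fintype α] (p q : α → ℝ) : ℝ :=
  ∑ x, if p x = 0 then 0 else p x * Real.log (p x / q x)

/-- Product (memoryless) output distribution of a channel given an input string. -/
def prodDist {X Y : Type*} [Fintype Y] {n : ℕ} (P : X → Y → ℝ) (w : Fin n → X) :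
    (Fin n → Y) → ℝ :=
  fun y => ∏ i, P (w i) (y i)

/-- Two distributions have a common support point. -/
def CommonSupport {α : Type*} (p q : α → ℝ) : Prop :=
  ∃ x, p x ≠ 0 ∧ q x ≠ 0

/-- `pmin` is the smallest nonzero transition probability of the channel `Q`. -/
def MinTransChan {X Y : Type*} (Q : X → Y → ℝ) (pmin : ℝ) : Prop :=
  0 < pmin ∧ (∃ x y, Q x y = pmin) ∧ ∀ x y, Q x y ≠ 0 → pmin ≤ Q x y

/-- `pmin` is the smallest nonzero transition probability among the channels `P` and `Q`. -/
def MinTransPair {Y Z : Type*} (P : Bool → Y → ℝ) (Q : Bool → Z → ℝ) (pmin : ℝ) : Prop :=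
  0 < pmin ∧ ((∃ b y, P b y = pmin) ∨ (∃ b z, Q b z = pmin)) ∧
    (∀ b y, P b y ≠ 0 → pmin ≤ P b y) ∧ ∀ b z, Q b z ≠ 0 → pmin ≤ Q b z

/-- `pmin` is the smallest nonzero probability among the values of two distributions. -/
def MinProbPair {α : Type*} (p q : α → ℝ) (pmin : ℝ) : Prop :=
  0 < pmin ∧ ((∃ x, p x = pmin) ∨ (∃ x, q x = pmin)) ∧
    (∀ x, p x ≠ 0 → pmin ≤ p x) ∧ ∀ x, q x ≠ 0 → pmin ≤ q x

/-- A deterministic `n`-step 2-hop protocol: codewords `x false = x⃗₀`, `x true = x⃗₁`,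
relay maps (the `i`-th transmission may depend only on the previously received symbols),
and a decoder. -/
structure DetProtocol (Y Z : Type*) (n : ℕ) where
  x : Bool → Fin n → Bool
  relay : (i : Fin n) → (Fin i → Y) → Bool
  dec : (Fin n → Z) → Bool

/-- The relay transmissions `W_1, …, W_n` determined by the received sequence `y`. -/
def DetProtocol.W {Y Z : Type*} {n : ℕ} (π : DetProtocol Y Z n) (y : Fin n → Y)
    (i : Fin n) : Bool :=
  π.relay i (fun j => y (Fin.castLE i.isLt.le j))

/-- `errProb P Q π b` is the conditional error probability `ℙ(Θ̂ = ¬b ∣ Θ = b)`. -/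
def errProb {Y Z : Type*} [Fintype Y] [Fintype Z] {n : ℕ}
    (P : Bool → Y → ℝ) (Q : Bool → Z → ℝ) (π : DetProtocol Y Z n) (b : Bool) : ℝ :=
  ∑ y : Fin n → Y, ∑ z : Fin n → Z,
    prodDist P (π.x b) y * prodDist Q (π.W y) z *
      (if π.dec z = !b then 1 else 0)

/-- Probability (given `Θ = b`) that the relay receives the prefix `ypre` in the
first `k` time steps. -/
def prefixProb {Y Z : Type*} [Fintype Y] {n : ℕ} (P : Bool → Y → ℝ)
    (π : DetProtocol Y Z n) (b : Bool) {k : ℕ} (hk : k ≤ n) (ypre : Fin k → Y) : ℝ :=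
  ∏ i : Fin k, P (π.x b (Fin.castLE hk i)) (ypre i)

/-- `errGiven P Q π b hk ypre` is the conditional error probability `p_{e,b}(y_{1…k})`:
the probability that `Θ̂ = ¬b` given `Θ = b` and that the relay receives `ypre` in the
first `k` time steps. -/
def errGiven {Y Z : Type*} [Fintype Y] [Fintype Z] {n : ℕ}
    (P : Bool → Y → ℝ) (Q : Bool → Z → ℝ) (π : DetProtocol Y Z n) (b : Bool)
    {k : ℕ} (hk : k ≤ n) (ypre : Fin k → Y) : ℝ :=
  (∑ y : Fin n → Y, ∑ z : Fin n → Z,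
      Set.indicator {y' : Fin n → Y | ∀ i : Fin k, y' (Fin.castLE hk i) = ypre i}
          (fun _ => (1 : ℝ)) y *
        prodDist P (π.x b) y * prodDist Q (π.W y) z *
        (if π.dec z = !b then 1 else 0)) /
    prefixProb P π b hk ypre

/-- The first `k` relay transmissions `w⃗(y_{1…k})`, determined by the first `k`
received symbols. -/
def relayPrefix {Y Z : Type*} {n : ℕ} (π : DetProtocol Y Z n) {k : ℕ} (hk : k ≤ n)
    (ypre : Fin k → Y) (i : Fin k) : Bool :=
  π.relay (Fin.castLE hk i) (fun j => ypre (Fin.castLE i.isLt.le j))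

/-- Probability that the decoder outputs `b` when the relay input string is `w`. -/
def decProb {Z : Type*} [Fintype Z] {n : ℕ} (Q : Bool → Z → ℝ)
    (dec : (Fin n → Z) → Bool) (b : Bool) (w : Fin n → Bool) : ℝ :=
  ∑ z : Fin n → Z, prodDist Q w z * (if dec z = b then 1 else 0)

/-- `w` extends the relay's first `k` transmissions (after receiving `ypre`) to length `n`,
minimizing the probability that the decoder outputs `b`, i.e. `w = w⃗_{1-b}(y_{1…k})`. -/
def IsBestExtension {Y Z : Type*} [Fintype Z] {n : ℕ} (Q : Bool → Z → ℝ)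
    (π : DetProtocol Y Z n) (b : Bool) {k : ℕ} (hk : k ≤ n) (ypre : Fin k → Y)
    (w : Fin n → Bool) : Prop :=
  (∀ i : Fin k, w (Fin.castLE hk i) = relayPrefix π hk ypre i) ∧
    ∀ w' : Fin n → Bool,
      (∀ i : Fin k, w' (Fin.castLE hk i) = relayPrefix π hk ypre i) →
        decProb Q π.dec b w ≤ decProb Q π.dec b w'

/-- A randomized `n`-step 2-hop protocol: a finite collection of deterministic
protocols together with a probability distribution (the shared private randomness). -/
structure RandProtocol (Y Z : Type*) (n : ℕ) where
  m : ℕ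
  ρ : Fin m → ℝ
  det : Fin m → DetProtocol Y Z n

/-- Validity of the randomness distribution of a randomized protocol. -/
def RandProtocol.Valid {Y Z : Type*} {n : ℕ} (π : RandProtocol Y Z n) : Prop :=
  (∀ r, 0 ≤ π.ρ r) ∧ ∑ r, π.ρ r = 1

/-- Overall error probability `ℙ(Θ̂ ≠ Θ)` of a randomized protocol, with `Θ` uniform. -/
def randPe {Y Z : Type*} [Fintype Y] [Fintype Z] {n : ℕ}
    (P : Bool → Y → ℝ) (Q : Bool → Z → ℝ) (π : RandProtocol Y Z n) : ℝ :=
  ∑ r, π.ρ r * ((errProb P Q (π.det r) false + errProb P Q (π.det r) true) / 2)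

/-- The 2-hop error exponent `E(P,Q)`: the supremum, over sequences of (randomized)
protocols, of the liminf of `-(1/n) log P_e(n,P,Q)`. -/
def twoHopExponent {Y Z : Type*} [Fintype Y] [Fintype Z]
    (P : Bool → Y → ℝ) (Q : Bool → Z → ℝ) : ℝ :=
  sSup { E | ∃ π : (n : ℕ) → RandProtocol Y Z n, (∀ n, (π n).Valid) ∧
    E = Filter.liminf (fun n : ℕ => -(1 / (n : ℝ)) * Real.log (randPe P Q (π n)))
          Filter.atTop }

/-- `m` is the unique global maximizer of `g` on `[0,1]`. -/
def UniqueArgmax (g : ℝ → ℝ) (m : ℝ) : Prop :=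
  m ∈ Set.Icc (0 : ℝ) 1 ∧ ∀ s ∈ Set.Icc (0 : ℝ) 1, s ≠ m → g s < g m

/-- `g` is skewed with respect to `s*`. -/
def SkewedFun (sStar : ℝ) (g : ℝ → ℝ) : Prop :=
  ∃ m, UniqueArgmax g m ∧ (m < sStar ∨ 1 - sStar < m)

/-- `g` is balanced with respect to `s*`. -/
def BalancedFun (sStar : ℝ) (g : ℝ → ℝ) : Prop :=
  ∃ m, UniqueArgmax g m ∧ sStar < m ∧ m < 1 - sStar

/-- `g` is neutral with respect to `s*`. -/
def NeutralFun (sStar : ℝ) (g : ℝ → ℝ) : Prop :=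
  ∃ m, UniqueArgmax g m ∧ (m = sStar ∨ m = 1 - sStar)

/-- `g` and `h` are of strictly opposite type w.r.t. `s*`. -/
def StrictlyOppositeType (sStar : ℝ) (g h : ℝ → ℝ) : Prop :=
  (SkewedFun sStar g ∧ BalancedFun sStar h) ∨ (BalancedFun sStar g ∧ SkewedFun sStar h)

/-- `g` and `h` are of weakly opposite type w.r.t. `s*`. -/
def WeaklyOppositeType (sStar : ℝ) (g h : ℝ → ℝ) : Prop :=
  ((SkewedFun sStar g ∨ NeutralFun sStar g) ∧ (BalancedFun sStar h ∨ NeutralFun sStar h)) ∨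
    ((BalancedFun sStar g ∨ NeutralFun sStar g) ∧ (SkewedFun sStar h ∨ NeutralFun sStar h))

/-- `g` is non-constant on `[0,1]`. -/
def NonConstantOn (g : ℝ → ℝ) : Prop :=
  ∃ s₁ ∈ Set.Icc (0 : ℝ) 1, ∃ s₂ ∈ Set.Icc (0 : ℝ) 1, g s₁ ≠ g s₂

/-- The quantity `E_s` from the paper. -/
def Efun {Y Z : Type*} [Fintype Y] [Fintype Z]
    (P : Bool → Y → ℝ) (Q : Bool → Z → ℝ) (s : ℝ) : ℝ :=
  min (max (dC (P false) (P true) s) (dC (P false) (P true) (1 - s)))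
      (max (dC (Q false) (Q true) s) (dC (Q false) (Q true) (1 - s)))


/-!
On the common support, `d_C(p, q, s) = -log Σ p(x) exp(s · log (q(x) / p(x)))`. By
Cauchy–Schwarz this exponential sum is log-convex, so `d_C` is concave; since `d_C` is not
constant some log-ratio is nonzero, the sum is then strictly convex and has a unique minimizer
on `[0,1]`. Hence both divergences are strictly increasing up to a unique peak and strictly
decreasing after it.

For two such functions `g`, `h`, suppose `E* = min (g s*) (h s*)` is neither peak value. By
continuity `s*` could be pushed towards the peak of the smaller function, so `g s* = h s*`;
and the two peaks cannot lie on the same side of `s*`, as moving towards both raises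
`min (g t) (h t)`. If `m_g < s* < m_h`, then `m_h < 1 - s*`: equality contradicts
`h (1 - s*) ≤ h s*`, and `m_h > 1 - s*` makes `t = max m_g (1 - m_h)` beat `s*` through the
pair `g t`, `h (1 - t)`.
-/

open Real Set Filter Topology

section ExpSum

variable {ι : Type*} (S : Finset ι) (w c : ι → ℝ)

def expSum (s : ℝ) : ℝ :=
  ∑ i ∈ S, w i * exp (s * c i)

theorem hasDerivAt_expSum (s : ℝ) : HasDerivAt (expSum S w c) (expSum S (w * c) c s) s := by
  refine (HasDerivAt.fun_sum (u := S) fun i _ =>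
    ((hasDerivAt_mul_const (c i)).exp.const_mul (w i))).congr_deriv ?_
  exact Finset.sum_congr rfl fun i _ => by simp only [Pi.mul_apply]; ring

theorem deriv_expSum : deriv (expSum S w c) = expSum S (w * c) c :=
  funext fun s => (hasDerivAt_expSum S w c s).deriv

theorem continuous_expSum : Continuous (expSum S w c) :=
  continuous_iff_continuousAt.2 fun s => (hasDerivAt_expSum S w c s).continuousAt

variable {S w c}

theorem expSum_pos (hw : ∀ i ∈ S, 0 < w i) (hS : S.Nonempty) (s : ℝ) : 0 < expSum S w c s :=
  Finset.sum_pos (fun i hi => mul_pos (hw i hi) (exp_pos _)) hS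

theorem expSum_eq_of_forall_eq_zero (hc : ∀ i ∈ S, c i = 0) (s : ℝ) :
    expSum S w c s = expSum S w c 0 :=
  Finset.sum_congr rfl fun i hi => by rw [hc i hi, mul_zero, zero_mul]

theorem sq_expSum_le_mul (hw : ∀ i ∈ S, 0 ≤ w i) (s : ℝ) :
    expSum S (w * c) c s ^ 2 ≤ expSum S w c s * expSum S (w * c * c) c s := by
  refine Finset.sum_sq_le_sum_mul_sum_of_sq_le_mul S
    (fun i hi => mul_nonneg (hw i hi) (exp_pos _).le) (fun i hi => ?_) (fun i _ => le_of_eq ?_)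
  · rw [show (w * c * c) i = w i * (c i * c i) by simp only [Pi.mul_apply, mul_assoc]]
    exact mul_nonneg (mul_nonneg (hw i hi) (mul_self_nonneg _)) (exp_pos _).le
  · simp only [Pi.mul_apply]; ring

theorem strictConvexOn_expSum (hw : ∀ i ∈ S, 0 < w i) (hc : ∃ i ∈ S, c i ≠ 0) :
    StrictConvexOn ℝ univ (expSum S w c) := by
  refine strictConvexOn_of_deriv2_pos' convex_univ (continuous_expSum S w c).continuousOn
    fun s _ => ?_
  obtain ⟨i, hi, hci⟩ := hc
  simp only [Function.iterate_succ, Function.iterate_zero, Function.id_comp,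
    Function.comp_apply, deriv_expSum]
  refine Finset.sum_pos' (fun j hj => ?_) ⟨i, hi, ?_⟩
  · rw [show (w * c * c) j = w j * (c j * c j) by simp only [Pi.mul_apply, mul_assoc]]
    exact mul_nonneg (mul_nonneg (hw j hj).le (mul_self_nonneg _)) (exp_pos _).le
  · rw [show (w * c * c) i = w i * (c i * c i) by simp only [Pi.mul_apply, mul_assoc]]
    exact mul_pos (mul_pos (hw i hi) (mul_self_pos.2 hci)) (exp_pos _)

theorem concaveOn_neg_log_expSum (hw : ∀ i ∈ S, 0 < w i) (hS : S.Nonempty) :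
    ConcaveOn ℝ univ (fun s => -log (expSum S w c s)) := by
  have hF := expSum_pos (c := c) hw hS
  have h1 : ∀ s, HasDerivAt (fun s => -log (expSum S w c s))
      (-(expSum S (w * c) c s / expSum S w c s)) s := fun s =>
    ((hasDerivAt_expSum S w c s).log (hF s).ne').neg
  have h2 : ∀ s, HasDerivAt (fun s => -(expSum S (w * c) c s / expSum S w c s))
      (-((expSum S (w * c * c) c s * expSum S w c s -
          expSum S (w * c) c s * expSum S (w * c) c s) / expSum S w c s ^ 2)) s := fun s =>
    ((hasDerivAt_expSum S (w * c) c s).div (hasDerivAt_expSum S w c s) (hF s).ne').neg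
  have hd : deriv (fun s => -log (expSum S w c s)) =
      fun s => -(expSum S (w * c) c s / expSum S w c s) :=
    funext fun s => (h1 s).deriv
  refine concaveOn_of_deriv2_nonpos' convex_univ
    (fun s _ => (h1 s).differentiableAt.differentiableWithinAt)
    (fun s _ => by rw [hd]; exact (h2 s).differentiableAt.differentiableWithinAt) fun s _ => ?_
  simp only [Function.iterate_succ, Function.iterate_zero, Function.id_comp, Function.comp_apply,
    hd, (h2 s).deriv]
  have := sq_expSum_le_mul (c := c) (fun i hi => (hw i hi).le) s
  rw [neg_nonpos]
  exact div_nonneg (by nlinarith) (sq_nonneg _)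

end ExpSum

section Chernoff

variable {α : Type*} [Fintype α] {p q : α → ℝ}

def commonSupp (p q : α → ℝ) : Finset α :=
  {x | p x ≠ 0 ∧ q x ≠ 0}

def logRatio (p q : α → ℝ) (x : α) : ℝ :=
  log (q x) - log (p x)

theorem cherSum_eq_expSum (hp : ∀ x, 0 ≤ p x) (hq : ∀ x, 0 ≤ q x) :
    cherSum p q = expSum (commonSupp p q) p (logRatio p q) := by
  funext s
  rw [cherSum, expSum, commonSupp, Finset.sum_filter]
  refine Finset.sum_congr rfl fun x _ => ?_
  by_cases h : p x = 0 ∨ q x = 0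
  · rw [if_pos h, if_neg (by tauto)]
  · rw [not_or] at h
    have hpx := (hp x).lt_of_ne' h.1
    rw [if_neg (by tauto), if_pos h, rpow_def_of_pos hpx, rpow_def_of_pos ((hq x).lt_of_ne' h.2),
      logRatio, ← exp_add]
    conv_rhs => enter [1]; rw [← exp_log hpx]
    rw [← exp_add]
    ring_nf

theorem pos_of_mem_commonSupp (hp : ∀ x, 0 ≤ p x) : ∀ x ∈ commonSupp p q, 0 < p x :=
  fun x hx => (hp x).lt_of_ne' (Finset.mem_filter.1 hx).2.1

theorem commonSupp_nonempty (hpq : CommonSupport p q) : (commonSupp p q).Nonempty := by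
  obtain ⟨x, hpx, hqx⟩ := hpq
  exact ⟨x, Finset.mem_filter.2 ⟨Finset.mem_univ x, hpx, hqx⟩⟩

theorem dC_eq_neg_log_expSum (hp : ∀ x, 0 ≤ p x) (hq : ∀ x, 0 ≤ q x) :
    dC p q = fun s => -log (expSum (commonSupp p q) p (logRatio p q) s) := by
  funext s
  rw [dC, cherSum_eq_expSum hp hq]

variable (hp : ∀ x, 0 ≤ p x) (hq : ∀ x, 0 ≤ q x) (hpq : CommonSupport p q)
include hp hq hpq

theorem continuous_dC : Continuous (dC p q) := by
  rw [dC_eq_neg_log_expSum hp hq]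
  exact ((continuous_expSum _ _ _).log fun s =>
    (expSum_pos (pos_of_mem_commonSupp hp) (commonSupp_nonempty hpq) s).ne').neg

theorem concaveOn_dC : ConcaveOn ℝ univ (dC p q) := by
  rw [dC_eq_neg_log_expSum hp hq]
  exact concaveOn_neg_log_expSum (pos_of_mem_commonSupp hp) (commonSupp_nonempty hpq)

theorem exists_uniqueArgmax_dC (hnc : NonConstantOn (dC p q)) :
    ∃ m, UniqueArgmax (dC p q) m := by
  have hw := pos_of_mem_commonSupp (q := q) hp
  have hF := expSum_pos (c := logRatio p q) hw (commonSupp_nonempty hpq)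
  rw [dC_eq_neg_log_expSum hp hq] at hnc ⊢
  by_cases hc : ∃ x ∈ commonSupp p q, logRatio p q x ≠ 0
  · have hconv := (strictConvexOn_expSum hw hc).subset (subset_univ _) (convex_Icc (0 : ℝ) 1)
    obtain ⟨m, hm, hmin⟩ := isCompact_Icc.exists_isMinOn (nonempty_Icc.2 zero_le_one)
      (continuous_expSum _ _ _).continuousOn
    refine ⟨m, hm, fun s hs hsm => neg_lt_neg (log_lt_log (hF m) ?_)⟩
    exact (hmin hs).lt_of_ne fun heq =>
      hsm (hconv.eq_of_isMinOn (fun t ht => heq ▸ hmin ht) hmin hs hm)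
  · push Not at hc
    obtain ⟨s₁, -, s₂, -, hne⟩ := hnc
    refine absurd ?_ hne
    simp only [expSum_eq_of_forall_eq_zero hc s₁, expSum_eq_of_forall_eq_zero hc s₂]

end Chernoff

structure StrictUnimodal (g : ℝ → ℝ) (m : ℝ) : Prop where
  mem_Icc : m ∈ Icc (0 : ℝ) 1
  strictMonoOn : StrictMonoOn g (Icc 0 m)
  strictAntiOn : StrictAntiOn g (Icc m 1)

section Unimodal

variable {g h : ℝ → ℝ} {m mg mh s t : ℝ}

theorem UniqueArgmax.sSup_image_eq (hm : UniqueArgmax g m) : sSup (g '' Icc 0 1) = g m :=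
  IsGreatest.csSup_eq ⟨mem_image_of_mem g hm.1, forall_mem_image.2 fun s hs =>
    (eq_or_ne s m).elim (fun h => h ▸ le_rfl) fun h => (hm.2 s hs h).le⟩

theorem UniqueArgmax.strictUnimodal (hm : UniqueArgmax g m) (hg : ConcaveOn ℝ (Icc 0 1) g) :
    StrictUnimodal g m := by
  refine ⟨hm.1, fun s hs t ht hst => ?_, fun s hs t ht hst => ?_⟩
  · by_contra! hle
    have hmt := hg.right_le_of_le_left'' ⟨hs.1, hs.2.trans hm.1.2⟩ hm.1 hst ht.2 hle
    exact (hm.2 s ⟨hs.1, hs.2.trans hm.1.2⟩ (hst.trans_le ht.2).ne).not_ge (hmt.trans hle)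
  · by_contra! hle
    have hms := hg.left_le_of_le_right'' hm.1 ⟨hm.1.1.trans ht.1, ht.2⟩ hs.1 hst hle
    exact (hm.2 t ⟨hm.1.1.trans ht.1, ht.2⟩ (hs.1.trans_lt hst).ne').not_ge (hms.trans hle)

namespace StrictUnimodal

theorem lt_of_lt_of_le (hg : StrictUnimodal g m) (hs : 0 ≤ s) (hst : s < t) (htm : t ≤ m) :
    g s < g t :=
  hg.strictMonoOn ⟨hs, hst.le.trans htm⟩ ⟨hs.trans hst.le, htm⟩ hst

theorem lt_of_le_of_lt (hg : StrictUnimodal g m) (hmt : m ≤ t) (hts : t < s) (hs : s ≤ 1) :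
    g s < g t :=
  hg.strictAntiOn ⟨hmt, hts.le.trans hs⟩ ⟨hmt.trans hts.le, hs⟩ hts

theorem uniqueArgmax (hg : StrictUnimodal g m) : UniqueArgmax g m :=
  ⟨hg.mem_Icc, fun _ hs hsm => hsm.lt_or_gt.elim (fun h => hg.lt_of_lt_of_le hs.1 h le_rfl)
    fun h => hg.lt_of_le_of_lt le_rfl h hs.2⟩

theorem le_of_forall_min_le (hg : StrictUnimodal g m) (hh : Continuous h)
    (hs : s ∈ Icc (0 : ℝ) 1) (hsm : s ≠ m)
    (hmin : ∀ t ∈ Icc (0 : ℝ) 1, min (g t) (h t) ≤ g s) :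
    h s ≤ g s := by
  by_contra! hlt
  have hev : ∀ᶠ t in 𝓝 s, g s < h t := hh.continuousAt.eventually (lt_mem_nhds hlt)
  obtain ⟨t, ht, hgt, hht⟩ : ∃ t ∈ Icc (0 : ℝ) 1, g s < g t ∧ g s < h t := by
    rcases hsm.lt_or_gt with hsm | hsm
    · obtain ⟨t, ⟨hst, htm⟩, hht⟩ :=
        (Eventually.and (Ioc_mem_nhdsGT hsm) (nhdsWithin_le_nhds hev)).exists
      exact ⟨t, ⟨hs.1.trans hst.le, htm.trans hg.mem_Icc.2⟩,
        hg.lt_of_lt_of_le hs.1 hst htm, hht⟩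
    · obtain ⟨t, ⟨hmt, hts⟩, hht⟩ :=
        (Eventually.and (Ico_mem_nhdsLT hsm) (nhdsWithin_le_nhds hev)).exists
      exact ⟨t, ⟨hg.mem_Icc.1.trans hmt, hts.le.trans hs.2⟩,
        hg.lt_of_le_of_lt hmt hts hs.2, hht⟩
  exact (hmin t ht).not_gt (lt_min hgt hht)

theorem eq_of_forall_min_le (hg : StrictUnimodal g mg) (hh : StrictUnimodal h mh)
    (hgc : Continuous g) (hhc : Continuous h) (hs : s ∈ Icc (0 : ℝ) 1)
    (hgm : min (g s) (h s) ≠ g mg) (hhm : min (g s) (h s) ≠ h mh)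
    (hmin : ∀ t ∈ Icc (0 : ℝ) 1, min (g t) (h t) ≤ min (g s) (h s)) : g s = h s := by
  rcases le_total (g s) (h s) with hle | hle
  · rw [min_eq_left hle] at hgm hmin
    exact hle.antisymm (hg.le_of_forall_min_le hhc hs (fun hsm => hgm (congrArg g hsm)) hmin)
  · rw [min_eq_right hle] at hhm hmin
    refine (hh.le_of_forall_min_le hgc hs (fun hsm => hhm (congrArg h hsm)) fun t ht => ?_).antisymm
      hle
    exact min_comm (h t) (g t) ▸ hmin t ht

theorem exists_lt_lt_of_same_side (hg : StrictUnimodal g mg) (hh : StrictUnimodal h mh)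
    (hs : s ∈ Icc (0 : ℝ) 1) (hside : (mg < s ∧ mh < s) ∨ (s < mg ∧ s < mh)) :
    ∃ t ∈ Icc (0 : ℝ) 1, g s < g t ∧ h s < h t := by
  rcases hside with ⟨hgs, hhs⟩ | ⟨hgs, hhs⟩
  · have ht := max_lt hgs hhs
    exact ⟨max mg mh, ⟨hg.mem_Icc.1.trans (le_max_left _ _), ht.le.trans hs.2⟩,
      hg.lt_of_le_of_lt (le_max_left _ _) ht hs.2, hh.lt_of_le_of_lt (le_max_right _ _) ht hs.2⟩
  · have ht := lt_min hgs hhs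
    exact ⟨min mg mh, ⟨hs.1.trans ht.le, (min_le_left _ _).trans hg.mem_Icc.2⟩,
      hg.lt_of_lt_of_le hs.1 ht (min_le_left _ _), hh.lt_of_lt_of_le hs.1 ht (min_le_right _ _)⟩

theorem skewedFun_and_balancedFun (hg : StrictUnimodal g mg) (hh : StrictUnimodal h mh)
    (hs : s ≤ 1 / 2) (hmg : mg < s) (hmh : s < mh) (hhs : h (1 - s) ≤ h s)
    (hrefl : ∀ t ∈ Icc (0 : ℝ) 1, ¬ (g s < g t ∧ h s < h (1 - t))) :
    SkewedFun s g ∧ BalancedFun s h := by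
  have hs0 : 0 ≤ s := hg.mem_Icc.1.trans hmg.le
  refine ⟨⟨mg, hg.uniqueArgmax, Or.inl hmg⟩, ⟨mh, hh.uniqueArgmax, hmh, ?_⟩⟩
  by_contra! hle
  rcases hle.eq_or_lt with heq | hlt
  · have hlt := hh.lt_of_lt_of_le hs0 hmh le_rfl
    rw [← heq] at hlt
    exact hhs.not_gt hlt
  · have hts : max mg (1 - mh) < s := max_lt hmg (by linarith)
    have hmh' := le_max_right mg (1 - mh)
    exact hrefl _ ⟨hg.mem_Icc.1.trans (le_max_left _ _), by linarith⟩
      ⟨hg.lt_of_le_of_lt (le_max_left _ _) hts (by linarith),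
        hh.lt_of_lt_of_le hs0 (by linarith) (by linarith)⟩

end StrictUnimodal

theorem trichotomy_of_strictUnimodal {e : ℝ} (hg : StrictUnimodal g mg)
    (hh : StrictUnimodal h mh) (hgc : Continuous g) (hhc : Continuous h)
    (hs : s ∈ Icc (0 : ℝ) (1 / 2)) (he : e = min (g s) (h s))
    (hmax : ∀ t ∈ Icc (0 : ℝ) 1, min (max (g t) (g (1 - t))) (max (h t) (h (1 - t))) ≤ e)
    (hgs : g (1 - s) ≤ g s) (hhs : h (1 - s) ≤ h s) :
    e = g mg ∨ e = h mh ∨ (e = g s ∧ e = h s ∧ s ≠ 0 ∧ StrictlyOppositeType s g h) := by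
  by_cases hgm : e = g mg
  · exact Or.inl hgm
  by_cases hhm : e = h mh
  · exact Or.inr (Or.inl hhm)
  refine Or.inr (Or.inr ?_)
  have hs01 : s ∈ Icc (0 : ℝ) 1 := ⟨hs.1, hs.2.trans (by norm_num)⟩
  have hA : ∀ t ∈ Icc (0 : ℝ) 1, min (g t) (h t) ≤ e := fun t ht =>
    (min_le_min (le_max_left _ _) (le_max_left _ _)).trans (hmax t ht)
  have hgh : g s = h s := hg.eq_of_forall_min_le hh hgc hhc hs01 (he ▸ hgm) (he ▸ hhm) (he ▸ hA)
  have heg : e = g s := by rw [he, hgh, min_self]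
  have heh : e = h s := heg.trans hgh
  have hsame : ∀ t ∈ Icc (0 : ℝ) 1, ¬ (g s < g t ∧ h s < h t) := fun t ht hlt =>
    (hmax t ht).not_gt
      (lt_min (lt_max_of_lt_left (heg.trans_lt hlt.1)) (lt_max_of_lt_left (heh.trans_lt hlt.2)))
  have hB : ∀ t ∈ Icc (0 : ℝ) 1, ¬ (g s < g t ∧ h s < h (1 - t)) := fun t ht hlt =>
    (hmax t ht).not_gt
      (lt_min (lt_max_of_lt_left (heg.trans_lt hlt.1)) (lt_max_of_lt_right (heh.trans_lt hlt.2)))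
  have hC : ∀ t ∈ Icc (0 : ℝ) 1, ¬ (h s < h t ∧ g s < g (1 - t)) := fun t ht hlt =>
    (hmax t ht).not_gt
      (lt_min (lt_max_of_lt_right (heg.trans_lt hlt.2)) (lt_max_of_lt_left (heh.trans_lt hlt.1)))
  refine ⟨heg, heh, ?_⟩
  rcases (show s ≠ mg by rintro rfl; exact hgm heg).lt_or_gt with hsg | hsg <;>
    rcases (show s ≠ mh by rintro rfl; exact hhm heh).lt_or_gt with hsh | hsh
  · obtain ⟨t, ht, hlt⟩ := hg.exists_lt_lt_of_same_side hh hs01 (Or.inr ⟨hsg, hsh⟩)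
    exact absurd hlt (hsame t ht)
  · obtain ⟨hskew, hbal⟩ := hh.skewedFun_and_balancedFun hg hs.2 hsh hsg hgs hC
    exact ⟨(hh.mem_Icc.1.trans_lt hsh).ne', Or.inr ⟨hbal, hskew⟩⟩
  · exact ⟨(hg.mem_Icc.1.trans_lt hsg).ne',
      Or.inl (hg.skewedFun_and_balancedFun hh hs.2 hsg hsh hhs hB)⟩
  · obtain ⟨t, ht, hlt⟩ := hg.exists_lt_lt_of_same_side hh hs01 (Or.inl ⟨hsg, hsh⟩)
    exact absurd hlt (hsame t ht)

end Unimodal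

theorem exists_strictUnimodal_dC {α : Type*} [Fintype α] {p q : α → ℝ}
    (hp : ∀ x, 0 ≤ p x) (hq : ∀ x, 0 ≤ q x) (hpq : CommonSupport p q)
    (hnc : NonConstantOn (dC p q)) :
    ∃ m, StrictUnimodal (dC p q) m :=
  let ⟨m, hm⟩ := exists_uniqueArgmax_dC hp hq hpq hnc
  ⟨m, hm.strictUnimodal ((concaveOn_dC hp hq hpq).subset (subset_univ _) (convex_Icc 0 1))⟩

/-- Lemma 10 of the paper: trichotomy for the optimizing `s*`. -/
theorem dcp_trichotomy {Y Z : Type*} [Fintype Y] [Fintype Z]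
    (P : Bool → Y → ℝ) (Q : Bool → Z → ℝ)
    (hP : IsChannel P) (hQ : IsChannel Q)
    (hPsupp : CommonSupport (P false) (P true))
    (hQsupp : CommonSupport (Q false) (Q true))
    (hPnc : NonConstantOn (fun s => dC (P false) (P true) s))
    (hQnc : NonConstantOn (fun s => dC (Q false) (Q true) s))
    (EStar sStar : ℝ)
    (hsStar : sStar ∈ Set.Icc (0 : ℝ) (1 / 2))
    (hmax : ∀ s ∈ Set.Icc (0 : ℝ) 1, Efun P Q s ≤ Efun P Q sStar)
    (hEStar : EStar = Efun P Q sStar)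
    (hPord : dC (P false) (P true) (1 - sStar) ≤ dC (P false) (P true) sStar)
    (hQord : dC (Q false) (Q true) (1 - sStar) ≤ dC (Q false) (Q true) sStar) :
    EStar = sSup ((fun s : ℝ => dC (P false) (P true) s) '' Set.Icc 0 1) ∨
    EStar = sSup ((fun s : ℝ => dC (Q false) (Q true) s) '' Set.Icc 0 1) ∨
    (EStar = dC (P false) (P true) sStar ∧ EStar = dC (Q false) (Q true) sStar ∧
      sStar ≠ 0 ∧
      StrictlyOppositeType sStar (fun s => dC (P false) (P true) s)
        (fun s => dC (Q false) (Q true) s)) := by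
  obtain ⟨mP, hmP⟩ := exists_strictUnimodal_dC (hP false).1 (hP true).1 hPsupp hPnc
  obtain ⟨mQ, hmQ⟩ := exists_strictUnimodal_dC (hQ false).1 (hQ true).1 hQsupp hQnc
  rw [hmP.uniqueArgmax.sSup_image_eq, hmQ.uniqueArgmax.sSup_image_eq]
  exact trichotomy_of_strictUnimodal hmP hmQ
    (continuous_dC (hP false).1 (hP true).1 hPsupp) (continuous_dC (hQ false).1 (hQ true).1 hQsupp)
    hsStar (by rw [hEStar, Efun, max_eq_left hPord, max_eq_left hQord])
    (fun t ht => (hmax t ht).trans_eq hEStar.symm) hPord hQord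

end
end

section
/- Let P, Q be binary-input DMCs with finite output alphabets whose conditional output distributions P_0, P_1 and Q_0, Q_1 each have a common support point, let p_min be the smallest nonzero transition probability among P and Q, and let s* ∈ [0,1/2] be a maximizer of E_s satisfying d_C(P_0,P_1,s*) ≥ d_C(P_0,P_1,1−s*) and d_C(Q_0,Q_1,s*) ≥ d_C(Q_0,Q_1,1−s*). Fix a deterministic n-step 2-hop protocol with encoder codewords x⃗_0, x⃗_1 ∈ {0,1}^n, and suppose the functions s ↦ d_C(x⃗_0, x⃗_1, P^n, s) and s ↦ d_C(P_0,P_1,s) are non-constant, concave with unique maximizers, and of weakly opposite type with respect to s*. Then −log(p_{e,0} + p_{e,1}) ≤ n·d_C(P_0,P_1,s*) + √(2n)·log(1/p_min) + log 4. -/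
open scoped BigOperators
open Finset

noncomputable section

/-!
Let `a` be the maximiser of `g s = d_C(x⃗₀, x⃗₁, Pⁿ, s)` and write `p, q` for the laws of the
relay's observation `y` under the two hypotheses. Whatever the relay and the decoder do, they
only see `y`, so `p_{e,0} + p_{e,1} ≥ ∑_y min (p y) (q y)`. Under the tilted law
`Q_a ∝ p^{1-a} q^a` the log-likelihood ratio `ℓ = log (p / q)` has mean `g'(a)`, and
maximality of `a` gives `a g'(a) ≥ 0 ≥ (1 - a) g'(a)`. Since `p = C Q_a e^{a ℓ}` and
`q = C Q_a e^{-(1-a) ℓ}` with `C = e^{-g a}`, both `p` and `q` exceed `e^{-g a - Δ} Q_a`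
wherever `|ℓ - g'(a)| ≤ Δ`. Under `Q_a` the letters are independent, so the variance of `ℓ` is
at most `n log² (1 / p_min)`, and Chebyshev with `Δ = √(2n) log (1 / p_min)` leaves
`Q_a`-mass at least `1/2` there. Finally `g a` is a sum of `n` per-letter terms, each `0`,
`d_C(P₀,P₁,a)` or `d_C(P₀,P₁,1-a)`, and concavity of `d_C(P₀,P₁,·)` together with the weakly
opposite types bounds both of these by `d_C(P₀,P₁,s*)`.
-/

def cherTerm {α : Type*} (p q : α → ℝ) (s : ℝ) (x : α) : ℝ :=
  if p x = 0 ∨ q x = 0 then 0 else p x ^ (1 - s) * q x ^ s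

/-- Only ever weighted by `tilted p q s x`, which vanishes where this takes junk values. -/
def llr {α : Type*} (p q : α → ℝ) (x : α) : ℝ :=
  Real.log (p x / q x)

def tiltedMean {α : Type*} [Fintype α] (p q : α → ℝ) (s : ℝ) : ℝ :=
  ∑ x, tilted p q s x * llr p q x

def tiltedVar {α : Type*} [Fintype α] (p q : α → ℝ) (s : ℝ) : ℝ :=
  ∑ x, tilted p q s x * (llr p q x - tiltedMean p q s) ^ 2

lemma IsPMF.le_one {α : Type*} [Fintype α] {p : α → ℝ} (hp : IsPMF p) (x : α) : p x ≤ 1 :=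
  hp.2 ▸ Finset.single_le_sum (fun i _ => hp.1 i) (Finset.mem_univ x)

section Chernoff

variable {α : Type*} {p q : α → ℝ} {s : ℝ}

lemma cherTerm_of_ne {x : α} (hpx : p x ≠ 0) (hqx : q x ≠ 0) :
    cherTerm p q s x = p x ^ (1 - s) * q x ^ s :=
  if_neg (not_or.mpr ⟨hpx, hqx⟩)

lemma cherTerm_of_eq_zero {x : α} (hx : p x = 0 ∨ q x = 0) : cherTerm p q s x = 0 :=
  if_pos hx

lemma cherTerm_nonneg (hp : ∀ x, 0 ≤ p x) (hq : ∀ x, 0 ≤ q x) (x : α) :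
    0 ≤ cherTerm p q s x := by
  unfold cherTerm
  split_ifs
  exacts [le_rfl, mul_nonneg (Real.rpow_nonneg (hp x) _) (Real.rpow_nonneg (hq x) _)]

lemma cherTerm_mul_exp_llr {x : α} (hpx : 0 < p x) (hqx : 0 < q x) :
    cherTerm p q s x * Real.exp (s * llr p q x) = p x := by
  rw [cherTerm_of_ne hpx.ne' hqx.ne', llr, Real.log_div hpx.ne' hqx.ne', Real.rpow_def_of_pos hpx,
    Real.rpow_def_of_pos hqx, ← Real.exp_add, ← Real.exp_add]
  convert Real.exp_log hpx using 2
  ring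

lemma cherTerm_mul_exp_neg_llr {x : α} (hpx : 0 < p x) (hqx : 0 < q x) :
    cherTerm p q s x * Real.exp (-((1 - s) * llr p q x)) = q x := by
  rw [cherTerm_of_ne hpx.ne' hqx.ne', llr, Real.log_div hpx.ne' hqx.ne', Real.rpow_def_of_pos hpx,
    Real.rpow_def_of_pos hqx, ← Real.exp_add, ← Real.exp_add]
  convert Real.exp_log hqx using 2
  ring

lemma hasDerivAt_cherTerm (hp : ∀ x, 0 ≤ p x) (hq : ∀ x, 0 ≤ q x) (x : α) (s : ℝ) :
    HasDerivAt (fun t => cherTerm p q t x) (-(cherTerm p q s x * llr p q x)) s := by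
  by_cases hx : p x = 0 ∨ q x = 0
  · simpa [cherTerm, hx] using hasDerivAt_const s (0 : ℝ)
  obtain ⟨hpx, hqx⟩ := not_or.mp hx
  have hpx' := (hp x).lt_of_ne' hpx
  have hqx' := (hq x).lt_of_ne' hqx
  have hexp : (fun t => cherTerm p q t x) =
      fun t => Real.exp (Real.log (p x) * (1 - t) + Real.log (q x) * t) := by
    ext t
    rw [cherTerm_of_ne hpx hqx, Real.rpow_def_of_pos hpx', Real.rpow_def_of_pos hqx', Real.exp_add]
  rw [hexp]
  refine ((((hasDerivAt_id s).const_sub 1).const_mul (Real.log (p x))).fun_add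
    ((hasDerivAt_id s).const_mul (Real.log (q x)))).exp.congr_deriv ?_
  rw [cherTerm_of_ne hpx hqx, llr, Real.log_div hpx hqx, Real.rpow_def_of_pos hpx',
    Real.rpow_def_of_pos hqx', ← Real.exp_add]
  simp only [id]
  ring

variable [Fintype α]

lemma cherSum_eq_sum_cherTerm : cherSum p q s = ∑ x, cherTerm p q s x := rfl

lemma cherSum_pos (hp : ∀ x, 0 ≤ p x) (hq : ∀ x, 0 ≤ q x) (hpq : CommonSupport p q) :
    0 < cherSum p q s := by
  obtain ⟨x, hpx, hqx⟩ := hpq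
  refine Finset.sum_pos' (fun x _ => cherTerm_nonneg hp hq x) ⟨x, Finset.mem_univ _, ?_⟩
  rw [← cherTerm, cherTerm_of_ne hpx hqx]
  exact mul_pos (Real.rpow_pos_of_pos ((hp x).lt_of_ne' hpx) _)
    (Real.rpow_pos_of_pos ((hq x).lt_of_ne' hqx) _)

lemma cherSum_le_one (hp : IsPMF p) (hq : IsPMF q) (hs : s ∈ Set.Icc (0 : ℝ) 1) :
    cherSum p q s ≤ 1 := by
  have hterm (x : α) : cherTerm p q s x ≤ (1 - s) * p x + s * q x := by
    unfold cherTerm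
    split_ifs
    · have := hp.1 x; have := hq.1 x; nlinarith [hs.1, hs.2]
    · exact Real.geom_mean_le_arith_mean2_weighted (by linarith [hs.2]) hs.1 (hp.1 x) (hq.1 x)
        (by ring)
  calc cherSum p q s ≤ ∑ x, ((1 - s) * p x + s * q x) := Finset.sum_le_sum fun x _ => hterm x
    _ = 1 := by rw [Finset.sum_add_distrib, ← Finset.mul_sum, ← Finset.mul_sum, hp.2, hq.2]; ring

lemma dC_nonneg (hp : IsPMF p) (hq : IsPMF q) (hs : s ∈ Set.Icc (0 : ℝ) 1) : 0 ≤ dC p q s :=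
  neg_nonneg.mpr <| Real.log_nonpos (Finset.sum_nonneg fun x _ => cherTerm_nonneg hp.1 hq.1 x)
    (cherSum_le_one hp hq hs)

lemma dC_self (hp : IsPMF p) : dC p p s = 0 := by
  have hterm (x : α) : cherTerm p p s x = p x := by
    by_cases hx : p x = 0
    · simp [cherTerm, hx]
    · rw [cherTerm_of_ne hx hx, ← Real.rpow_add ((hp.1 x).lt_of_ne' hx)]
      simp
  simp [dC, cherSum_eq_sum_cherTerm, hterm, hp.2]

lemma dC_swap (p q : α → ℝ) (s : ℝ) : dC q p s = dC p q (1 - s) := by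
  simp only [dC, cherSum]
  congr 2
  refine Finset.sum_congr rfl fun x _ => ?_
  rw [sub_sub_cancel, mul_comm]
  exact if_congr or_comm rfl rfl

lemma tilted_eq_div (x : α) : tilted p q s x = cherTerm p q s x / cherSum p q s := rfl

lemma tilted_nonneg (hp : ∀ x, 0 ≤ p x) (hq : ∀ x, 0 ≤ q x) (x : α) : 0 ≤ tilted p q s x :=
  div_nonneg (cherTerm_nonneg hp hq x) (Finset.sum_nonneg fun y _ => cherTerm_nonneg hp hq y)

lemma tilted_of_eq_zero {x : α} (hx : p x = 0 ∨ q x = 0) : tilted p q s x = 0 := by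
  rw [tilted_eq_div, cherTerm_of_eq_zero hx, zero_div]

lemma sum_tilted (hp : ∀ x, 0 ≤ p x) (hq : ∀ x, 0 ≤ q x) (hpq : CommonSupport p q) :
    ∑ x, tilted p q s x = 1 := by
  simp only [tilted_eq_div, ← Finset.sum_div, ← cherSum_eq_sum_cherTerm]
  exact div_self (cherSum_pos hp hq hpq).ne'

lemma cherSum_mul_tilted (hC : cherSum p q s ≠ 0) (x : α) :
    cherSum p q s * tilted p q s x = cherTerm p q s x :=
  mul_div_cancel₀ _ hC

lemma hasDerivAt_cherSum (hp : ∀ x, 0 ≤ p x) (hq : ∀ x, 0 ≤ q x) (s : ℝ) :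
    HasDerivAt (cherSum p q) (-∑ x, cherTerm p q s x * llr p q x) s := by
  rw [← Finset.sum_neg_distrib]
  exact HasDerivAt.fun_sum fun x _ => hasDerivAt_cherTerm hp hq x s

lemma hasDerivAt_dC (hp : ∀ x, 0 ≤ p x) (hq : ∀ x, 0 ≤ q x) (hpq : CommonSupport p q)
    (s : ℝ) : HasDerivAt (dC p q) (tiltedMean p q s) s := by
  refine ((hasDerivAt_cherSum hp hq s).log (cherSum_pos hp hq hpq).ne').fun_neg.congr_deriv ?_
  rw [tiltedMean, neg_div, neg_neg, Finset.sum_div]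
  simp only [tilted_eq_div, div_mul_eq_mul_div]

end Chernoff

lemma IsMaxOn.sub_mul_le_zero_of_hasDerivAt {f : ℝ → ℝ} {S : Set ℝ} {a f' t : ℝ}
    (hmax : IsMaxOn f S a) (hS : Convex ℝ S) (ha : a ∈ S) (ht : t ∈ S) (hf : HasDerivAt f f' a) :
    (t - a) * f' ≤ 0 := by
  simpa [mul_comm] using hmax.localize.hasFDerivWithinAt_nonpos
    hf.hasFDerivAt.hasFDerivWithinAt (sub_mem_posTangentConeAt_of_segment_subset
      (hS.segment_subset ha ht))

lemma sum_filter_lt_le_half {ι : Type*} [Fintype ι] {w f : ι → ℝ} {c : ℝ} (hw : ∀ i, 0 ≤ w i)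
    (hf : ∀ i, 0 ≤ f i) (hc : 2 * ∑ i, w i * f i ≤ c) : ∑ i with c < f i, w i ≤ 1 / 2 := by
  by_contra! hlarge
  have hc₀ : 0 ≤ c := by
    linarith [Finset.sum_nonneg fun i (_ : i ∈ univ) => mul_nonneg (hw i) (hf i)]
  obtain ⟨j, hj, hwj⟩ : ∃ j ∈ univ.filter (c < f ·), 0 < w j := by
    by_contra! h
    linarith [Finset.sum_nonpos h]
  have hstrict : c * ∑ i with c < f i, w i < ∑ i with c < f i, w i * f i := by
    rw [Finset.mul_sum]
    refine Finset.sum_lt_sum (fun i hi => ?_) ⟨j, hj, ?_⟩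
    · rw [mul_comm]
      exact mul_le_mul_of_nonneg_left (Finset.mem_filter.mp hi).2.le (hw i)
    · rw [mul_comm]
      exact mul_lt_mul_of_pos_left (Finset.mem_filter.mp hj).2 hwj
  have hsub : ∑ i with c < f i, w i * f i ≤ ∑ i, w i * f i :=
    Finset.sum_le_sum_of_subset_of_nonneg (Finset.filter_subset _ _)
      fun i _ _ => mul_nonneg (hw i) (hf i)
  nlinarith

theorem half_mul_exp_neg_le_sum_min {α : Type*} [Fintype α] {p q : α → ℝ} {s Δ : ℝ}
    (hp : ∀ x, 0 ≤ p x) (hq : ∀ x, 0 ≤ q x) (hpq : CommonSupport p q)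
    (hs : s ∈ Set.Icc (0 : ℝ) 1) (hmax : IsMaxOn (dC p q) (Set.Icc 0 1) s)
    (hΔ : 0 ≤ Δ) (hvar : 2 * tiltedVar p q s ≤ Δ ^ 2) :
    1 / 2 * Real.exp (-(dC p q s + Δ)) ≤ ∑ x, min (p x) (q x) := by
  set μ := tiltedMean p q s
  set C := cherSum p q s
  have hC : 0 < C := cherSum_pos hp hq hpq
  have hderiv := hasDerivAt_dC hp hq hpq s
  have hμ₀ : 0 ≤ s * μ := by
    nlinarith [hmax.sub_mul_le_zero_of_hasDerivAt (convex_Icc 0 1) hs ⟨le_rfl, zero_le_one⟩ hderiv]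
  have hμ₁ : (1 - s) * μ ≤ 0 :=
    hmax.sub_mul_le_zero_of_hasDerivAt (convex_Icc 0 1) hs ⟨zero_le_one, le_rfl⟩ hderiv
  have htypical (x : α) (hx : ¬ Δ ^ 2 < (llr p q x - μ) ^ 2) :
      C * tilted p q s x * Real.exp (-Δ) ≤ min (p x) (q x) := by
    by_cases hx₀ : p x = 0 ∨ q x = 0
    · rw [tilted_of_eq_zero hx₀, mul_zero, zero_mul]
      exact le_min (hp x) (hq x)
    obtain ⟨hpx, hqx⟩ := not_or.mp hx₀
    obtain ⟨hlo, hhi⟩ := abs_le_of_sq_le_sq' (not_lt.mp hx) hΔ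
    rw [cherSum_mul_tilted hC.ne']
    have hT := cherTerm_nonneg hp hq x (s := s)
    refine le_min ?_ ?_
    · rw [← cherTerm_mul_exp_llr ((hp x).lt_of_ne' hpx) ((hq x).lt_of_ne' hqx)]
      gcongr
      nlinarith [hs.1, hs.2]
    · rw [← cherTerm_mul_exp_neg_llr ((hp x).lt_of_ne' hpx) ((hq x).lt_of_ne' hqx)]
      gcongr
      nlinarith [hs.1, hs.2]
  have hmass : 1 / 2 ≤ ∑ x with ¬ Δ ^ 2 < (llr p q x - μ) ^ 2, tilted p q s x := by
    have hsplit := Finset.sum_filter_add_sum_filter_not univ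
      (fun x => Δ ^ 2 < (llr p q x - μ) ^ 2) (tilted p q s)
    rw [sum_tilted hp hq hpq] at hsplit
    linarith [sum_filter_lt_le_half (tilted_nonneg hp hq) (fun x => sq_nonneg (llr p q x - μ)) hvar]
  have hexp : Real.exp (-dC p q s) = C := by rw [dC, neg_neg, Real.exp_log hC]
  calc 1 / 2 * Real.exp (-(dC p q s + Δ)) = C * Real.exp (-Δ) * (1 / 2) := by
        rw [neg_add, Real.exp_add, hexp]; ring
    _ ≤ C * Real.exp (-Δ) * ∑ x with ¬ Δ ^ 2 < (llr p q x - μ) ^ 2, tilted p q s x := by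
        gcongr
    _ = ∑ x with ¬ Δ ^ 2 < (llr p q x - μ) ^ 2, C * tilted p q s x * Real.exp (-Δ) := by
        rw [Finset.mul_sum]
        exact Finset.sum_congr rfl fun x _ => by ring
    _ ≤ ∑ x with ¬ Δ ^ 2 < (llr p q x - μ) ^ 2, min (p x) (q x) :=
        Finset.sum_le_sum fun x hx => htypical x (Finset.mem_filter.mp hx).2
    _ ≤ ∑ x, min (p x) (q x) :=
        Finset.sum_le_sum_of_subset_of_nonneg (Finset.filter_subset _ _)
          fun x _ _ => le_min (hp x) (hq x)

section ProductWeights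

variable {ι β : Type*} [Fintype ι] [DecidableEq ι] [Fintype β] {w : ι → β → ℝ}

lemma sum_prod_mul_apply (hw : ∀ i, ∑ v, w i v = 1) (i : ι) (f : β → ℝ) :
    ∑ y : ι → β, (∏ k, w k (y k)) * f (y i) = ∑ v, w i v * f v := by
  have hfactor (y : ι → β) :
      (∏ k, w k (y k)) * f (y i) = ∏ k, w k (y k) * if k = i then f (y k) else 1 := by
    rw [Finset.prod_mul_distrib, Finset.prod_ite_eq']
    simp
  simp_rw [hfactor]
  rw [← Fintype.prod_sum fun k v => w k v * if k = i then f v else 1, Finset.prod_eq_single i]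
  · simp
  · intro k _ hk
    simp [hk, hw k]
  · simp

lemma sum_prod_mul_apply_mul_apply (hw : ∀ i, ∑ v, w i v = 1) {i j : ι} (hij : i ≠ j)
    (f g : β → ℝ) :
    ∑ y : ι → β, (∏ k, w k (y k)) * (f (y i) * g (y j)) =
      (∑ v, w i v * f v) * ∑ v, w j v * g v := by
  set φ : ι → β → ℝ := fun k v => (if k = i then f v else 1) * if k = j then g v else 1
  have hfactor (y : ι → β) :
      (∏ k, w k (y k)) * (f (y i) * g (y j)) = ∏ k, w k (y k) * φ k (y k) := by
    rw [Finset.prod_mul_distrib, Finset.prod_mul_distrib]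
    simp [Finset.prod_ite_eq']
  have hsum (k : ι) : ∑ v, w k v * φ k v =
      (if k = i then ∑ v, w i v * f v else 1) * if k = j then ∑ v, w j v * g v else 1 := by
    by_cases hki : k = i
    · subst hki
      simp [φ, hij]
    by_cases hkj : k = j
    · subst hkj
      simp [φ, hki]
    simp [φ, hki, hkj, hw k]
  simp_rw [hfactor]
  rw [← Fintype.prod_sum fun k v => w k v * φ k v, Finset.prod_congr rfl fun k _ => hsum k,
    Finset.prod_mul_distrib]
  simp [Finset.prod_ite_eq']

lemma sum_prod_mul_sum_apply (hw : ∀ i, ∑ v, w i v = 1) (f : ι → β → ℝ) :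
    ∑ y : ι → β, (∏ k, w k (y k)) * ∑ i, f i (y i) = ∑ i, ∑ v, w i v * f i v := by
  simp_rw [Finset.mul_sum]
  rw [Finset.sum_comm]
  exact Finset.sum_congr rfl fun i _ => sum_prod_mul_apply hw i (f i)

lemma sum_prod_mul_sq_sum_apply (hw : ∀ i, ∑ v, w i v = 1) {f : ι → β → ℝ}
    (hf : ∀ i, ∑ v, w i v * f i v = 0) :
    ∑ y : ι → β, (∏ k, w k (y k)) * (∑ i, f i (y i)) ^ 2 = ∑ i, ∑ v, w i v * f i v ^ 2 := by
  simp_rw [sq, Finset.sum_mul_sum, Finset.mul_sum]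
  rw [Finset.sum_comm]
  refine Finset.sum_congr rfl fun i _ => ?_
  rw [Finset.sum_comm, Finset.sum_eq_single i]
  · exact sum_prod_mul_apply hw i fun v => f i v * f i v
  · intro j _ hji
    rw [sum_prod_mul_apply_mul_apply hw (Ne.symm hji), hf i, zero_mul]
  · simp

end ProductWeights

lemma sum_mul_sub_sq_eq {β : Type*} [Fintype β] {w : β → ℝ} (hw : ∑ v, w v = 1) (f : β → ℝ) :
    ∑ v, w v * (f v - ∑ u, w u * f u) ^ 2 = ∑ v, w v * f v ^ 2 - (∑ v, w v * f v) ^ 2 := by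
  set m := ∑ u, w u * f u
  have hexpand (v : β) :
      w v * (f v - m) ^ 2 = w v * f v ^ 2 - 2 * m * (w v * f v) + m ^ 2 * w v := by
    ring
  simp_rw [hexpand]
  rw [Finset.sum_add_distrib, Finset.sum_sub_distrib, ← Finset.mul_sum, ← Finset.mul_sum, hw]
  ring

lemma abs_log_div_le_log_one_div {a b c : ℝ} (hc : 0 < c) (ha : c ≤ a) (ha₁ : a ≤ 1)
    (hb : c ≤ b) (hb₁ : b ≤ 1) : |Real.log (a / b)| ≤ Real.log (1 / c) := by
  have := Real.log_le_log hc ha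
  have := Real.log_le_log hc hb
  have := Real.log_nonpos (hc.le.trans ha) ha₁
  have := Real.log_nonpos (hc.le.trans hb) hb₁
  rw [Real.log_div (hc.trans_le ha).ne' (hc.trans_le hb).ne', one_div, Real.log_inv, abs_le]
  constructor <;> linarith

lemma tiltedVar_le_sq {α : Type*} [Fintype α] {p q : α → ℝ} {s L : ℝ} (hp : ∀ x, 0 ≤ p x)
    (hq : ∀ x, 0 ≤ q x) (hpq : CommonSupport p q)
    (hL : ∀ x, p x ≠ 0 → q x ≠ 0 → |llr p q x| ≤ L) : tiltedVar p q s ≤ L ^ 2 := by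
  have hw := sum_tilted hp hq hpq (s := s)
  have hsecond : ∑ x, tilted p q s x * llr p q x ^ 2 ≤ L ^ 2 := by
    calc ∑ x, tilted p q s x * llr p q x ^ 2 ≤ ∑ x, tilted p q s x * L ^ 2 := by
          refine Finset.sum_le_sum fun x _ => ?_
          by_cases hx : p x = 0 ∨ q x = 0
          · simp [tilted_of_eq_zero hx]
          obtain ⟨hpx, hqx⟩ := not_or.mp hx
          obtain ⟨hlo, hhi⟩ := abs_le.mp (hL x hpx hqx)
          exact mul_le_mul_of_nonneg_left (sq_le_sq' hlo hhi) (tilted_nonneg hp hq x)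
      _ = L ^ 2 := by rw [← Finset.sum_mul, hw, one_mul]
  have hvar := sum_mul_sub_sq_eq hw (llr p q)
  rw [tiltedVar, tiltedMean, hvar]
  nlinarith [sq_nonneg (∑ x, tilted p q s x * llr p q x)]

section ProductDistribution

variable {X Y : Type*} [Fintype Y] {n : ℕ} {P : X → Y → ℝ}

lemma prodDist_nonneg (hP : ∀ x y, 0 ≤ P x y) (w : Fin n → X) (y : Fin n → Y) :
    0 ≤ prodDist P w y :=
  Finset.prod_nonneg fun _ _ => hP _ _

lemma sum_prodDist (hP : IsChannel P) (w : Fin n → X) : ∑ y, prodDist P w y = 1 := by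
  simp only [prodDist]
  rw [← Fintype.prod_sum fun i v => P (w i) v]
  simp [(hP _).2]

lemma prodDist_ne_zero {w : Fin n → X} {y : Fin n → Y} :
    prodDist P w y ≠ 0 ↔ ∀ i, P (w i) (y i) ≠ 0 :=
  Finset.prod_ne_zero_iff.trans (by simp)

variable (x₀ x₁ : Fin n → X)

lemma commonSupport_prodDist (h : ∀ i, CommonSupport (P (x₀ i)) (P (x₁ i))) :
    CommonSupport (prodDist P x₀) (prodDist P x₁) := by
  choose v hv₀ hv₁ using h
  exact ⟨v, prodDist_ne_zero.2 hv₀, prodDist_ne_zero.2 hv₁⟩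

lemma cherTerm_prodDist (hP : ∀ x y, 0 ≤ P x y) (s : ℝ) (y : Fin n → Y) :
    cherTerm (prodDist P x₀) (prodDist P x₁) s y = ∏ i, cherTerm (P (x₀ i)) (P (x₁ i)) s (y i) := by
  by_cases h : ∃ i, P (x₀ i) (y i) = 0 ∨ P (x₁ i) (y i) = 0
  · obtain ⟨i, hi⟩ := h
    have hy : prodDist P x₀ y = 0 ∨ prodDist P x₁ y = 0 := by
      by_contra! hne
      exact hi.elim (prodDist_ne_zero.1 hne.1 i) (prodDist_ne_zero.1 hne.2 i)
    rw [cherTerm_of_eq_zero hy]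
    exact (Finset.prod_eq_zero (Finset.mem_univ i) (cherTerm_of_eq_zero hi)).symm
  simp only [not_exists, not_or] at h
  rw [cherTerm_of_ne (prodDist_ne_zero.2 fun i => (h i).1) (prodDist_ne_zero.2 fun i => (h i).2),
    prodDist, prodDist, ← Real.finsetProd_rpow _ _ (fun i _ => hP _ _),
    ← Real.finsetProd_rpow _ _ (fun i _ => hP _ _), ← Finset.prod_mul_distrib]
  exact Finset.prod_congr rfl fun i _ => (cherTerm_of_ne (h i).1 (h i).2).symm

lemma cherSum_prodDist (hP : ∀ x y, 0 ≤ P x y) (s : ℝ) :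
    cherSum (prodDist P x₀) (prodDist P x₁) s = ∏ i, cherSum (P (x₀ i)) (P (x₁ i)) s := by
  simp only [cherSum_eq_sum_cherTerm, cherTerm_prodDist x₀ x₁ hP]
  exact (Fintype.prod_sum fun i v => cherTerm (P (x₀ i)) (P (x₁ i)) s v).symm

lemma tilted_prodDist (hP : ∀ x y, 0 ≤ P x y) (s : ℝ) (y : Fin n → Y) :
    tilted (prodDist P x₀) (prodDist P x₁) s y = ∏ i, tilted (P (x₀ i)) (P (x₁ i)) s (y i) := by
  simp only [tilted_eq_div, cherTerm_prodDist x₀ x₁ hP, cherSum_prodDist x₀ x₁ hP,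
    Finset.prod_div_distrib]

lemma llr_prodDist {y : Fin n → Y} (h₀ : prodDist P x₀ y ≠ 0) (h₁ : prodDist P x₁ y ≠ 0) :
    llr (prodDist P x₀) (prodDist P x₁) y = ∑ i, llr (P (x₀ i)) (P (x₁ i)) (y i) := by
  rw [llr, prodDist, prodDist, ← Finset.prod_div_distrib, Real.log_prod fun i _ =>
    div_ne_zero (prodDist_ne_zero.1 h₀ i) (prodDist_ne_zero.1 h₁ i)]
  rfl

lemma tilted_mul_llr_prodDist (hP : ∀ x y, 0 ≤ P x y) (s : ℝ) (F : ℝ → ℝ) (y : Fin n → Y) :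
    tilted (prodDist P x₀) (prodDist P x₁) s y * F (llr (prodDist P x₀) (prodDist P x₁) y) =
      (∏ i, tilted (P (x₀ i)) (P (x₁ i)) s (y i)) * F (∑ i, llr (P (x₀ i)) (P (x₁ i)) (y i)) := by
  by_cases hy : prodDist P x₀ y = 0 ∨ prodDist P x₁ y = 0
  · rw [← tilted_prodDist x₀ x₁ hP, tilted_of_eq_zero hy, zero_mul, zero_mul]
  obtain ⟨h₀, h₁⟩ := not_or.mp hy
  rw [tilted_prodDist x₀ x₁ hP, llr_prodDist x₀ x₁ h₀ h₁]

variable {x₀ x₁}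

lemma dC_prodDist (hP : ∀ x y, 0 ≤ P x y) (h : ∀ i, CommonSupport (P (x₀ i)) (P (x₁ i)))
    (s : ℝ) : dC (prodDist P x₀) (prodDist P x₁) s = ∑ i, dC (P (x₀ i)) (P (x₁ i)) s := by
  rw [dC, cherSum_prodDist x₀ x₁ hP,
    Real.log_prod fun i _ => (cherSum_pos (hP _) (hP _) (h i)).ne', ← Finset.sum_neg_distrib]
  rfl

lemma tiltedMean_prodDist (hP : ∀ x y, 0 ≤ P x y) (h : ∀ i, CommonSupport (P (x₀ i)) (P (x₁ i)))
    (s : ℝ) : tiltedMean (prodDist P x₀) (prodDist P x₁) s =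
      ∑ i, tiltedMean (P (x₀ i)) (P (x₁ i)) s :=
  (Finset.sum_congr rfl fun y _ => tilted_mul_llr_prodDist x₀ x₁ hP s (fun t => t) y).trans
    (sum_prod_mul_sum_apply (fun i => sum_tilted (hP _) (hP _) (h i)) _)

lemma tiltedVar_prodDist (hP : ∀ x y, 0 ≤ P x y) (h : ∀ i, CommonSupport (P (x₀ i)) (P (x₁ i)))
    (s : ℝ) : tiltedVar (prodDist P x₀) (prodDist P x₁) s =
      ∑ i, tiltedVar (P (x₀ i)) (P (x₁ i)) s := by
  have hw (i : Fin n) := sum_tilted (hP _) (hP _) (h i) (s := s)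
  have hcentred (i : Fin n) : ∑ v, tilted (P (x₀ i)) (P (x₁ i)) s v *
      (llr (P (x₀ i)) (P (x₁ i)) v - tiltedMean (P (x₀ i)) (P (x₁ i)) s) = 0 := by
    simp only [mul_sub, Finset.sum_sub_distrib, ← Finset.sum_mul, hw i, one_mul, tiltedMean,
      sub_self]
  calc tiltedVar (prodDist P x₀) (prodDist P x₁) s
      = ∑ y : Fin n → Y, (∏ i, tilted (P (x₀ i)) (P (x₁ i)) s (y i)) *
          (∑ i, (llr (P (x₀ i)) (P (x₁ i)) (y i) - tiltedMean (P (x₀ i)) (P (x₁ i)) s)) ^ 2 := by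
        refine Finset.sum_congr rfl fun y _ => ?_
        rw [Finset.sum_sub_distrib, ← tiltedMean_prodDist hP h]
        exact tilted_mul_llr_prodDist x₀ x₁ hP s
          (fun t => (t - tiltedMean (prodDist P x₀) (prodDist P x₁) s) ^ 2) y
    _ = ∑ i, tiltedVar (P (x₀ i)) (P (x₁ i)) s := sum_prod_mul_sq_sum_apply hw hcentred

lemma tiltedVar_prodDist_le (hP : IsChannel P) (h : ∀ i, CommonSupport (P (x₀ i)) (P (x₁ i)))
    {c : ℝ} (hc : 0 < c) (hmin : ∀ x y, P x y ≠ 0 → c ≤ P x y) (s : ℝ) :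
    tiltedVar (prodDist P x₀) (prodDist P x₁) s ≤ n * Real.log (1 / c) ^ 2 := by
  have hP₀ (x : X) (y : Y) : 0 ≤ P x y := (hP x).1 y
  rw [tiltedVar_prodDist hP₀ h]
  calc ∑ i, tiltedVar (P (x₀ i)) (P (x₁ i)) s ≤ ∑ _i : Fin n, Real.log (1 / c) ^ 2 :=
        Finset.sum_le_sum fun i _ => tiltedVar_le_sq (hP₀ _) (hP₀ _) (h i) fun v h₀ h₁ =>
          abs_log_div_le_log_one_div hc (hmin _ _ h₀) ((hP _).le_one v) (hmin _ _ h₁)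
            ((hP _).le_one v)
    _ = n * Real.log (1 / c) ^ 2 := by simp

end ProductDistribution

lemma UniqueArgmax.isMaxOn {g : ℝ → ℝ} {m : ℝ} (h : UniqueArgmax g m) :
    IsMaxOn g (Set.Icc 0 1) m :=
  isMaxOn_iff.2 fun s hs =>
    (eq_or_ne s m).elim (fun hsm => hsm ▸ le_rfl) fun hsm => (h.2 s hs hsm).le

lemma exists_uniqueArgmax_of_weaklySkewed {σ : ℝ} {g : ℝ → ℝ}
    (h : SkewedFun σ g ∨ NeutralFun σ g) : ∃ m, UniqueArgmax g m ∧ (m ≤ σ ∨ 1 - σ ≤ m) := by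
  rcases h with ⟨m, hm, hmσ | hmσ⟩ | ⟨m, hm, rfl | rfl⟩
  · exact ⟨m, hm, .inl hmσ.le⟩
  · exact ⟨m, hm, .inr hmσ.le⟩
  · exact ⟨_, hm, .inl le_rfl⟩
  · exact ⟨_, hm, .inr le_rfl⟩

lemma exists_uniqueArgmax_of_weaklyBalanced {σ : ℝ} {g : ℝ → ℝ} (hσ : σ ≤ 1 / 2)
    (h : BalancedFun σ g ∨ NeutralFun σ g) : ∃ m, UniqueArgmax g m ∧ σ ≤ m ∧ m ≤ 1 - σ := by
  rcases h with ⟨m, hm, hσm, hm1σ⟩ | ⟨m, hm, rfl | rfl⟩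
  · exact ⟨m, hm, hσm.le, hm1σ.le⟩
  · exact ⟨_, hm, le_rfl, by linarith⟩
  · exact ⟨_, hm, by linarith, le_rfl⟩

lemma ConcaveOn.le_of_isMaxOn_of_mem_uIcc {S : Set ℝ} {h : ℝ → ℝ} {m t u : ℝ}
    (hh : ConcaveOn ℝ S h) (hmax : IsMaxOn h S m) (hm : m ∈ S) (ht : t ∈ S)
    (hu : u ∈ Set.uIcc t m) : h t ≤ h u := by
  have := hh.ge_on_segment ht hm (by rwa [segment_eq_uIcc])
  rwa [min_eq_left (isMaxOn_iff.1 hmax t ht)] at this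

theorem exists_uniqueArgmax_le_of_weaklyOppositeType {σ : ℝ} {g h : ℝ → ℝ}
    (hσ : σ ∈ Set.Icc (0 : ℝ) (1 / 2)) (hh : ConcaveOn ℝ (Set.Icc 0 1) h)
    (hord : h (1 - σ) ≤ h σ) (hopp : WeaklyOppositeType σ g h) :
    ∃ a, UniqueArgmax g a ∧ h a ≤ h σ ∧ h (1 - a) ≤ h σ := by
  obtain ⟨hσ₀, hσ₁⟩ := hσ
  rcases hopp with ⟨hg, hh'⟩ | ⟨hg, hh'⟩
  · obtain ⟨a, ha, haσ⟩ := exists_uniqueArgmax_of_weaklySkewed hg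
    obtain ⟨m, hm, hσm, hm1σ⟩ := exists_uniqueArgmax_of_weaklyBalanced hσ₁ hh'
    have houter (t : ℝ) (ht : t ∈ Set.Icc (0 : ℝ) 1) (htσ : t ≤ σ ∨ 1 - σ ≤ t) : h t ≤ h σ := by
      rcases htσ with htσ | htσ
      · exact hh.le_of_isMaxOn_of_mem_uIcc hm.isMaxOn hm.1 ht (Set.mem_uIcc.2 (.inl ⟨htσ, hσm⟩))
      · exact (hh.le_of_isMaxOn_of_mem_uIcc hm.isMaxOn hm.1 ht
          (Set.mem_uIcc.2 (.inr ⟨hm1σ, htσ⟩))).trans hord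
    refine ⟨a, ha, houter a ha.1 haσ, houter (1 - a) ⟨by linarith [ha.1.2], by linarith [ha.1.1]⟩
      (haσ.symm.imp (fun _ => by linarith) fun _ => by linarith)⟩
  · obtain ⟨a, ha, hσa, ha1σ⟩ := exists_uniqueArgmax_of_weaklyBalanced hσ₁ hg
    obtain ⟨m, hm, hmσ⟩ := exists_uniqueArgmax_of_weaklySkewed hh'
    have hinner (t : ℝ) (hσt : σ ≤ t) (ht1σ : t ≤ 1 - σ) : h t ≤ h σ := by
      have ht : t ∈ Set.Icc (0 : ℝ) 1 := ⟨by linarith, by linarith⟩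
      rcases hmσ with hmσ | hmσ
      · exact hh.le_of_isMaxOn_of_mem_uIcc hm.isMaxOn hm.1 ht (Set.mem_uIcc.2 (.inr ⟨hmσ, hσt⟩))
      · exact (hh.le_of_isMaxOn_of_mem_uIcc hm.isMaxOn hm.1 ht
          (Set.mem_uIcc.2 (.inl ⟨ht1σ, hmσ⟩))).trans hord
    exact ⟨a, ha, hinner a hσa ha1σ, hinner (1 - a) (by linarith) (by linarith)⟩

lemma CommonSupport.of_bool {Y : Type*} {P : Bool → Y → ℝ}
    (h : CommonSupport (P false) (P true)) (a b : Bool) :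
    CommonSupport (P a) (P b) := by
  obtain ⟨v, hv₀, hv₁⟩ := h
  have hv (c : Bool) : P c v ≠ 0 := by cases c <;> assumption
  exact ⟨v, hv a, hv b⟩

section BinaryInput

variable {Y : Type*} [Fintype Y] {n : ℕ} {P : Bool → Y → ℝ}

lemma dC_prodDist_le (hP : IsChannel P) (hsupp : CommonSupport (P false) (P true))
    (x₀ x₁ : Fin n → Bool) {s c : ℝ} (hc : 0 ≤ c) (hs : dC (P false) (P true) s ≤ c)
    (h1s : dC (P false) (P true) (1 - s) ≤ c) :
    dC (prodDist P x₀) (prodDist P x₁) s ≤ n * c := by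
  rw [dC_prodDist (fun b y => (hP b).1 y) fun i => hsupp.of_bool _ _]
  calc ∑ i, dC (P (x₀ i)) (P (x₁ i)) s ≤ ∑ _i : Fin n, c := by
        refine Finset.sum_le_sum fun i _ => ?_
        cases x₀ i <;> cases x₁ i
        · rwa [dC_self (hP false)]
        · exact hs
        · rwa [dC_swap]
        · rwa [dC_self (hP true)]
    _ = n * c := by simp

lemma sum_min_prodDist_le_errProb_add {Z : Type*} [Fintype Z] {Q : Bool → Z → ℝ}
    (hQ : IsChannel Q) (π : DetProtocol Y Z n) :
    ∑ y, min (prodDist P (π.x false) y) (prodDist P (π.x true) y) ≤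
      errProb P Q π false + errProb P Q π true := by
  rw [errProb, errProb, ← Finset.sum_add_distrib]
  refine Finset.sum_le_sum fun y _ => ?_
  rw [← Finset.sum_add_distrib]
  set m := min (prodDist P (π.x false) y) (prodDist P (π.x true) y)
  calc m = ∑ z, prodDist Q (π.W y) z * m := by rw [← Finset.sum_mul, sum_prodDist hQ, one_mul]
    _ ≤ _ := by
      refine Finset.sum_le_sum fun z _ => ?_
      have hR := prodDist_nonneg (fun b v => (hQ b).1 v) (π.W y) z
      rw [mul_comm]
      cases π.dec z <;> simp only [Bool.not_false, Bool.not_true, reduceCtorEq, if_true,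
        if_false, mul_one, mul_zero, add_zero, zero_add] <;> gcongr
      exacts [min_le_right _ _, min_le_left _ _]

end BinaryInput

theorem opp_type_P_bound_general {Y Z : Type*} [Fintype Y] [Fintype Z]
    (P : Bool → Y → ℝ) (Q : Bool → Z → ℝ)
    (hP : IsChannel P) (hQ : IsChannel Q)
    (hPsupp : CommonSupport (P false) (P true))
    (pmin : ℝ) (hpmin : MinTransPair P Q pmin)
    (sStar : ℝ) (hsStar : sStar ∈ Set.Icc (0 : ℝ) (1 / 2))
    (hPord : dC (P false) (P true) (1 - sStar) ≤ dC (P false) (P true) sStar)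
    {n : ℕ} (π : DetProtocol Y Z n)
    (hhcc : ConcaveOn ℝ (Set.Icc (0 : ℝ) 1) (fun s => dC (P false) (P true) s))
    (hopp : WeaklyOppositeType sStar
      (fun s => dC (prodDist P (π.x false)) (prodDist P (π.x true)) s)
      (fun s => dC (P false) (P true) s)) :
    - Real.log (errProb P Q π false + errProb P Q π true) ≤
      n * dC (P false) (P true) sStar +
        Real.sqrt (2 * n) * Real.log (1 / pmin) + Real.log 4 := by
  obtain ⟨a, ha, hPa, hPa'⟩ := exists_uniqueArgmax_le_of_weaklyOppositeType hsStar hhcc hPord hopp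
  have hP₀ (b : Bool) (y : Y) : 0 ≤ P b y := (hP b).1 y
  have hsupp (i : Fin n) : CommonSupport (P (π.x false i)) (P (π.x true i)) := hPsupp.of_bool _ _
  set L := Real.log (1 / pmin)
  have hL : 0 ≤ L := by
    obtain ⟨v, hv, -⟩ := hPsupp
    exact Real.log_nonneg <|
      one_le_one_div hpmin.1 ((hpmin.2.2.1 _ _ hv).trans ((hP false).le_one v))
  have hdC : dC (prodDist P (π.x false)) (prodDist P (π.x true)) a ≤
      n * dC (P false) (P true) sStar :=
    dC_prodDist_le hP hPsupp _ _ (dC_nonneg (hP false) (hP true) ⟨hsStar.1, by linarith [hsStar.2]⟩)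
      hPa hPa'
  have hmin := half_mul_exp_neg_le_sum_min (prodDist_nonneg hP₀ _) (prodDist_nonneg hP₀ _)
    (commonSupport_prodDist _ _ hsupp) ha.1 ha.isMaxOn (by positivity : 0 ≤ Real.sqrt (2 * n) * L)
    (by
      rw [mul_pow, Real.sq_sqrt (by positivity)]
      nlinarith [tiltedVar_prodDist_le hP hsupp hpmin.1 hpmin.2.2.1 a])
  have herr := hmin.trans (sum_min_prodDist_le_errProb_add hQ π)
  calc -Real.log (errProb P Q π false + errProb P Q π true)
      ≤ -Real.log (1 / 2 * Real.exp (-(dC (prodDist P (π.x false)) (prodDist P (π.x true)) a +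
          Real.sqrt (2 * n) * L))) := neg_le_neg (Real.log_le_log (by positivity) herr)
    _ = dC (prodDist P (π.x false)) (prodDist P (π.x true)) a + Real.sqrt (2 * n) * L +
          Real.log 2 := by
        rw [Real.log_mul (by norm_num) (Real.exp_pos _).ne', Real.log_exp, one_div, Real.log_inv]
        ring
    _ ≤ _ := by
        have : Real.log 2 ≤ Real.log 4 := Real.log_le_log (by norm_num) (by norm_num)
        linarith

/-- Lemma 11 of the paper. -/
theorem opp_type_P_bound {Y Z : Type*} [Fintype Y] [Fintype Z]
    (P : Bool → Y → ℝ) (Q : Bool → Z → ℝ)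
    (hP : IsChannel P) (hQ : IsChannel Q)
    (hPsupp : CommonSupport (P false) (P true))
    (hQsupp : CommonSupport (Q false) (Q true))
    (pmin : ℝ) (hpmin : MinTransPair P Q pmin)
    (sStar : ℝ) (hsStar : sStar ∈ Set.Icc (0 : ℝ) (1 / 2))
    (hmax : ∀ s ∈ Set.Icc (0 : ℝ) 1, Efun P Q s ≤ Efun P Q sStar)
    (hPord : dC (P false) (P true) (1 - sStar) ≤ dC (P false) (P true) sStar)
    (hQord : dC (Q false) (Q true) (1 - sStar) ≤ dC (Q false) (Q true) sStar)
    {n : ℕ} (π : DetProtocol Y Z n)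
    (hgnc : NonConstantOn
      (fun s => dC (prodDist P (π.x false)) (prodDist P (π.x true)) s))
    (hhnc : NonConstantOn (fun s => dC (P false) (P true) s))
    (hgcc : ConcaveOn ℝ (Set.Icc (0 : ℝ) 1)
      (fun s => dC (prodDist P (π.x false)) (prodDist P (π.x true)) s))
    (hhcc : ConcaveOn ℝ (Set.Icc (0 : ℝ) 1) (fun s => dC (P false) (P true) s))
    (hopp : WeaklyOppositeType sStar
      (fun s => dC (prodDist P (π.x false)) (prodDist P (π.x true)) s)
      (fun s => dC (P false) (P true) s)) :
    - Real.log (errProb P Q π false + errProb P Q π true) ≤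
      n * dC (P false) (P true) sStar +
        Real.sqrt (2 * n) * Real.log (1 / pmin) + Real.log 4 :=
  opp_type_P_bound_general P Q hP hQ hPsupp pmin hpmin sStar hsStar hPord π hhcc hopp

end
end
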